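/- Let σ > 0 and let μ_a and μ_b be the Gaussian measures on ℝ with means a and b respectively and common variance σ². Then ‖μ_a − μ_b‖_var ≤ (2/(σ·√(2π)))·|a − b|. -/

import Mathlib

/-!
For `a ≤ b` the half-line `(c, ∞)`, `c = (a + b) / 2`, is a Hahn decomposition of the pair
`(μ_a, μ_b)`: there the density of `μ_b` dominates that of `μ_a`, and below `c` the reverse
holds. Hence `‖μ_a - μ_b‖_var = 2 (μ_b - μ_a)(c, ∞)`. Translating `μ_b` back to `μ_a`, this is
`2 μ_a (c - (b - a), c]`, the mass of an interval of length `b - a`, which is at most `b - a`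
times the peak density `1 / (σ √(2π))`.
-/

open MeasureTheory ProbabilityTheory

/-- Total variation distance between two (finite) measures, via the Jordan-type
decomposition given by measure subtraction: `‖μ - ν‖_var = (μ - ν)(univ) + (ν - μ)(univ)`. -/
noncomputable def tvDist {α : Type*} [MeasurableSpace α] (μ ν : Measure α) : ℝ :=
  ((μ - ν) Set.univ + (ν - μ) Set.univ).toReal

open Set Real
open scoped NNReal ENNReal

lemma tvDist_comm {α : Type*} [MeasurableSpace α] (μ ν : Measure α) :
    tvDist μ ν = tvDist ν μ := by
  rw [tvDist, tvDist, add_comm]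

namespace MeasureTheory.IsHahnDecomposition

variable {α : Type*} [MeasurableSpace α] {μ ν : Measure α} {s : Set α}

lemma sub_apply_univ [IsFiniteMeasure ν] (hs : IsHahnDecomposition μ ν s) :
    (μ - ν) univ = μ sᶜ - ν sᶜ := by
  have hsc := hs.measurableSet.compl
  rw [← measure_add_measure_compl hs.measurableSet,
    Measure.sub_apply_eq_zero_of_isHahnDecomposition hs, zero_add, ← Measure.restrict_apply_self,
    Measure.restrict_sub_eq_restrict_sub_restrict hsc, Measure.sub_apply hsc hs.ge_on_compl,
    Measure.restrict_apply_self, Measure.restrict_apply_self]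

lemma tvDist_eq [IsProbabilityMeasure μ] [IsProbabilityMeasure ν]
    (hs : IsHahnDecomposition μ ν s) : tvDist μ ν = 2 * (ν.real s - μ.real s) := by
  have real_sub {ρ τ : Measure α} [IsFiniteMeasure τ] {t : Set α}
      (ht : ρ.restrict t ≤ τ.restrict t) : (τ t - ρ t).toReal = τ.real t - ρ.real t :=
    ENNReal.toReal_sub_of_le (by simpa using ht univ) (measure_ne_top _ _)
  rw [tvDist, hs.sub_apply_univ, hs.compl.sub_apply_univ, compl_compl,
    ENNReal.toReal_add (by finiteness) (by finiteness), real_sub hs.ge_on_compl,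
    real_sub hs.le_on, probReal_compl_eq_one_sub hs.measurableSet,
    probReal_compl_eq_one_sub hs.measurableSet]
  ring

end MeasureTheory.IsHahnDecomposition

namespace ProbabilityTheory

variable {a b : ℝ} {v : ℝ≥0}

lemma gaussianPDFReal_le_inv_sqrt (a : ℝ) (v : ℝ≥0) (x : ℝ) :
    gaussianPDFReal a v x ≤ (√(2 * π * v))⁻¹ := by
  rw [gaussianPDFReal]
  refine mul_le_of_le_one_right (by positivity) (exp_le_one_iff.2 ?_)
  exact div_nonpos_of_nonpos_of_nonneg (neg_nonpos.2 (sq_nonneg _)) (by positivity)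

lemma gaussianPDF_le_gaussianPDF {x : ℝ} (h : (x - b) ^ 2 ≤ (x - a) ^ 2) :
    gaussianPDF a v x ≤ gaussianPDF b v x := by
  refine ENNReal.ofReal_le_ofReal (mul_le_mul_of_nonneg_left (exp_le_exp.2 ?_) (by positivity))
  exact div_le_div_of_nonneg_right (neg_le_neg h) (by positivity)

lemma gaussianReal_le_mul_volume (a : ℝ) (hv : v ≠ 0) (s : Set ℝ) :
    gaussianReal a v s ≤ ENNReal.ofReal (√(2 * π * v))⁻¹ * volume s := by
  rw [gaussianReal_apply a hv, ← setLIntegral_const]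
  exact setLIntegral_mono measurable_const fun x _ ↦
    ENNReal.ofReal_le_ofReal (gaussianPDFReal_le_inv_sqrt a v x)

lemma gaussianReal_real_Ioc_le (a : ℝ) (hv : v ≠ 0) {x y : ℝ} (hxy : x ≤ y) :
    (gaussianReal a v).real (Ioc x y) ≤ (√(2 * π * v))⁻¹ * (y - x) := by
  have h := gaussianReal_le_mul_volume a hv (Ioc x y)
  rw [Real.volume_Ioc, ← ENNReal.ofReal_mul (by positivity)] at h
  exact ENNReal.toReal_le_of_le_ofReal (mul_nonneg (by positivity) (sub_nonneg.2 hxy)) h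

lemma gaussianReal_restrict_le_restrict (hv : v ≠ 0) {s : Set ℝ} (hs : MeasurableSet s)
    (h : ∀ x ∈ s, (x - b) ^ 2 ≤ (x - a) ^ 2) :
    (gaussianReal a v).restrict s ≤ (gaussianReal b v).restrict s := by
  rw [gaussianReal_of_var_ne_zero _ hv, gaussianReal_of_var_ne_zero _ hv,
    restrict_withDensity hs, restrict_withDensity hs]
  exact withDensity_mono <|
    ae_restrict_of_forall_mem hs fun x hx ↦ gaussianPDF_le_gaussianPDF (h x hx)

lemma isHahnDecomposition_gaussianReal (hv : v ≠ 0) (hab : a ≤ b) :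
    IsHahnDecomposition (gaussianReal a v) (gaussianReal b v) (Ioi ((a + b) / 2)) where
  measurableSet := measurableSet_Ioi
  le_on := gaussianReal_restrict_le_restrict hv measurableSet_Ioi
    fun x (hx : _ < x) ↦ by nlinarith
  ge_on_compl := gaussianReal_restrict_le_restrict hv measurableSet_Ioi.compl
    fun x (hx : ¬ _ < x) ↦ by nlinarith

lemma gaussianReal_add_apply_Ioi (a d c : ℝ) (v : ℝ≥0) :
    gaussianReal (a + d) v (Ioi c) = gaussianReal a v (Ioi (c - d)) := by
  rw [← gaussianReal_map_add_const, Measure.map_apply (measurable_add_const d) measurableSet_Ioi,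
    preimage_add_const_Ioi]

lemma tvDist_gaussianReal_le (hv : v ≠ 0) (a b : ℝ) :
    tvDist (gaussianReal a v) (gaussianReal b v) ≤ 2 / √(2 * π * v) * |a - b| := by
  wlog hab : a ≤ b generalizing a b
  · rw [tvDist_comm, abs_sub_comm]
    exact this b a (le_of_not_ge hab)
  set c := (a + b) / 2
  have shift :
      (gaussianReal b v).real (Ioi c) = (gaussianReal a v).real (Ioi (c - (b - a))) := by
    rw [measureReal_def, measureReal_def, ← gaussianReal_add_apply_Ioi, add_sub_cancel]
  have split : (gaussianReal a v).real (Ioi (c - (b - a))) =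
      (gaussianReal a v).real (Ioc (c - (b - a)) c) + (gaussianReal a v).real (Ioi c) := by
    rw [← measureReal_union Ioc_disjoint_Ioi_same measurableSet_Ioi,
      Ioc_union_Ioi_eq_Ioi (by linarith)]
  have hI := gaussianReal_real_Ioc_le a hv (x := c - (b - a)) (y := c) (by linarith)
  rw [(isHahnDecomposition_gaussianReal hv hab).tvDist_eq, shift, split, abs_sub_comm,
    abs_of_nonneg (sub_nonneg.2 hab)]
  rw [sub_sub_cancel] at hI
  linear_combination 2 * hI

end ProbabilityTheory

/-- For Gaussian measures on `ℝ` with means `a`, `b` and common variance `σ²`,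
`‖μ_a - μ_b‖_var ≤ (2 / (σ √(2π))) |a - b|`. -/
theorem stmt10 (σ : ℝ) (hσ : 0 < σ) (a b : ℝ) :
    tvDist (gaussianReal a ⟨σ ^ 2, sq_nonneg σ⟩) (gaussianReal b ⟨σ ^ 2, sq_nonneg σ⟩) ≤
      2 / (σ * Real.sqrt (2 * Real.pi)) * |a - b| := by
  have hv : (⟨σ ^ 2, sq_nonneg σ⟩ : ℝ≥0) ≠ 0 := ne_of_gt (pow_pos hσ 2)
  have hsqrt : √(2 * π * (⟨σ ^ 2, sq_nonneg σ⟩ : ℝ≥0)) = σ * √(2 * π) := by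
    change √(2 * π * σ ^ 2) = _
    rw [mul_comm, Real.sqrt_mul (sq_nonneg σ), Real.sqrt_sq hσ.le]
  rw [← hsqrt]
  exact tvDist_gaussianReal_le hv a b
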